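/- For every natural number s ≥ 1 and every real x, s·σ(x) = σ(s·x) + σ(s·x − 1) + ⋯ + σ(s·x − (s−1)), where σ is the clipped ReLU. -/
import Mathlib


theorem scaled_clipped_relu_sum
    (σ : ℝ → ℝ) (hσ : ∀ t, σ t = min (max t 0) 1) :
    ∀ (s : ℕ), 1 ≤ s → ∀ x : ℝ,
      (s : ℝ) * σ x = ∑ k ∈ Finset.range s, σ ((s : ℝ) * x - (k : ℝ)) := by
  have key : ∀ t : ℝ, σ t = min t 1 - min t 0 := by
    intro t
    rw [hσ]
    rcases le_total t 0 with h | h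
    · rw [max_eq_right h, min_eq_left h, min_eq_left (h.trans zero_le_one)]
      simp
    · rw [max_eq_left h, min_eq_right h]
      ring
  intro s hs x
  set y := (s : ℝ) * x with hy
  have step : ∀ k : ℕ, σ (y - (k : ℝ)) = min y ((k : ℝ) + 1) - min y (k : ℝ) := by
    intro k
    rw [key]
    have h1 : min y ((k : ℝ) + 1) - (k : ℝ) = min (y - k) 1 := by
      rw [← min_sub_sub_right]; ring_nf
    have h2 : min y (k : ℝ) - (k : ℝ) = min (y - k) 0 := by
      rw [← min_sub_sub_right]; ring_nf
    linarith
  rw [Finset.sum_congr rfl (fun k _ => step k)]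
  have tel : ∑ k ∈ Finset.range s, (min y ((k : ℝ) + 1) - min y (k : ℝ))
      = min y (s : ℝ) - min y 0 := by
    have := Finset.sum_range_sub (fun k : ℕ => min y (k : ℝ)) s
    simpa [Nat.cast_add, Nat.cast_one] using this
  rw [tel, key x]
  have hs0 : (0 : ℝ) ≤ (s : ℝ) := Nat.cast_nonneg s
  have h1 : min y (s : ℝ) = (s : ℝ) * min x 1 := by
    rw [mul_min_of_nonneg _ _ hs0, mul_one]
  have h2 : min y 0 = (s : ℝ) * min x 0 := by
    rw [mul_min_of_nonneg _ _ hs0, mul_zero]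
  rw [h1, h2]
  ring
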